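/- arXiv:0910.4433 — 4 statements merged into one kernel-verified Lean document; each statement's English description precedes it below -/
import Mathlib

section
/- Let (C_n) be an inverse system of abelian groups satisfying the Mittag-Leffler condition. If the inverse limit lim C_n is zero, then the associated pro-object is the zero pro-object, i.e. for every n there exists n' ≥ n such that the transition map C_{n'} → C_n is the zero map. -/
/-!
By the Mittag-Leffler condition every `C n` has a stable image `E n`, the image of `C m → C n`
for all large `m`, and the transition maps restrict to surjections `E (n + 1) → E n`. Lifting an
element of `E n` step by step therefore produces a compatible family through it, i.e. `E n` lies
in the image of the inverse limit. If the limit vanishes, so does `E n`, which says that the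
transition map onto `C n` from a large enough index is zero.
-/

theorem exists_seq_of_forall_exists {X : ℕ → Type*} (R : ∀ k, X (k + 1) → X k → Prop)
    (hR : ∀ k a, ∃ b, R k b a) (a : X 0) : ∃ y : ∀ k, X k, y 0 = a ∧ ∀ k, R k (y (k + 1)) (y k) := by
  choose g hg using hR
  exact ⟨fun k => Nat.rec a g k, rfl, fun k => hg k _⟩

section InverseSystem

variable {C : ℕ → Type*} [∀ n, AddGroup (C n)] {f : ∀ ⦃m n : ℕ⦄, n ≤ m → (C m →+ C n)}

def IsCompatible (f : ∀ ⦃m n : ℕ⦄, n ≤ m → (C m →+ C n)) (x : ∀ n, C n) : Prop :=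
  ∀ ⦃m n : ℕ⦄ (h : n ≤ m), f h (x m) = x n

variable (hcomp : ∀ ⦃k m n : ℕ⦄ (hmk : m ≤ k) (hnm : n ≤ m) (x : C k),
    f hnm (f hmk x) = f (hnm.trans hmk) x)
include hcomp

theorem exists_mem_range_map_eq {M : ℕ → ℕ} (hM : ∀ n, n ≤ M n)
    (hrange : ∀ n k (hk : M n ≤ k), (f ((hM n).trans hk)).range = (f (hM n)).range)
    {m n : ℕ} (h : n ≤ m) {a : C n} (ha : a ∈ (f (hM n)).range) :
    ∃ b ∈ (f (hM m)).range, f h b = a := by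
  -- realise both stable images from the common index `max (M n) (M m)`
  have hnk : M n ≤ max (M n) (M m) := le_max_left _ _
  have hmk : M m ≤ max (M n) (M m) := le_max_right _ _
  obtain ⟨c, rfl⟩ : a ∈ (f ((hM n).trans hnk)).range := hrange n _ hnk ▸ ha
  exact ⟨f ((hM m).trans hmk) c, ⟨f hmk c, hcomp _ _ c⟩, hcomp _ _ c⟩

variable (hid : ∀ n, f (le_refl n) = AddMonoidHom.id (C n))
include hid

theorem map_eq_of_map_succ_eq {n : ℕ} {y : ∀ k, C (n + k)}
    (hy : ∀ k, f (Nat.le_succ (n + k)) (y (k + 1)) = y k) {k l : ℕ} (hkl : k ≤ l) :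
    f (Nat.add_le_add_left hkl n) (y l) = y k := by
  induction l, hkl using Nat.le_induction with
  | base => rw [hid]; rfl
  | succ l hkl ih => rw [← hy l, hcomp] at ih; exact ih

theorem exists_isCompatible_of_map_succ_eq {n : ℕ} {y : ∀ k, C (n + k)}
    (hy : ∀ k, f (Nat.le_succ (n + k)) (y (k + 1)) = y k) :
    ∃ x, IsCompatible f x ∧ x n = y 0 := by
  refine ⟨fun j => f (Nat.le_add_left j n) (y j), fun m j h => ?_,
    map_eq_of_map_succ_eq hcomp hid hy (Nat.zero_le n)⟩
  change f h (f _ (y m)) = f _ (y j)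
  rw [hcomp, ← map_eq_of_map_succ_eq hcomp hid hy h, hcomp]

theorem exists_isCompatible_of_mem_range {M : ℕ → ℕ} (hM : ∀ n, n ≤ M n)
    (hrange : ∀ n k (hk : M n ≤ k), (f ((hM n).trans hk)).range = (f (hM n)).range)
    {n : ℕ} {a : C n} (ha : a ∈ (f (hM n)).range) : ∃ x, IsCompatible f x ∧ x n = a := by
  obtain ⟨y, hy0, hy⟩ := exists_seq_of_forall_exists
    (X := fun k => (f (hM (n + k))).range) (fun k b c => f (Nat.le_succ (n + k)) b = c)
    (fun k c => by
      obtain ⟨b, hb, hbc⟩ := exists_mem_range_map_eq hcomp hM hrange (Nat.le_succ _) c.2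
      exact ⟨⟨b, hb⟩, hbc⟩)
    ⟨a, ha⟩
  obtain ⟨x, hx, hxn⟩ := exists_isCompatible_of_map_succ_eq hcomp hid (y := fun k => (y k).1) hy
  exact ⟨x, hx, hxn.trans (congrArg Subtype.val hy0)⟩

end InverseSystem

/-- An inverse system of abelian groups indexed by ℕ, with Mittag-Leffler condition and
vanishing inverse limit, is pro-zero: every transition map is eventually zero. -/
theorem stmt_0 (C : ℕ → Type*) [∀ n, AddCommGroup (C n)]
    (f : ∀ ⦃m n : ℕ⦄, n ≤ m → (C m →+ C n))
    (hid : ∀ n, f (le_refl n) = AddMonoidHom.id (C n))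
    (hcomp : ∀ ⦃k m n : ℕ⦄ (hmk : m ≤ k) (hnm : n ≤ m) (x : C k),
      f hnm (f hmk x) = f (hnm.trans hmk) x)
    (hML : ∀ n, ∃ m, ∃ hnm : n ≤ m, ∀ k (hk : m ≤ k),
      (f (hnm.trans hk)).range = (f hnm).range)
    (hlim : ∀ x : ∀ n, C n, (∀ ⦃m n : ℕ⦄ (h : n ≤ m), f h (x m) = x n) → ∀ n, x n = 0) :
    ∀ n, ∃ m, ∃ h : n ≤ m, f h = 0 := by
  choose M hM hrange using hML
  intro n
  refine ⟨M n, hM n, AddMonoidHom.ext fun c => ?_⟩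
  obtain ⟨x, hx, hxn⟩ := exists_isCompatible_of_mem_range hcomp hid hM hrange ⟨c, rfl⟩
  exact hxn ▸ hlim x hx n
end

section
/- Let R be a Noetherian ring, I an ideal, M a finitely generated R-module with an I-good filtration (K_n), and let R → R' be a flat ring map. Then the filtration (R' ⊗_R K_n) of R' ⊗_R M is an I·R'-good filtration; in particular, the topology on R' ⊗_R M defined by the submodules R' ⊗_R K_n coincides with the I·R'-adic topology. -/
/-!
Base change along `R → R'` turns `I • N` into `I R' • (R' ⊗ N)`, since both sides are spanned
by the elements `i • (1 ⊗ n)`. Hence the base-changed filtration is again `I R'`-good, and any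
good filtration starting at `⊤` is squeezed between the adic filtration and a shift of it:
`Iⁿ • ⊤ ≤ K n` and `K (N + n) = Iⁿ • K N ≤ Iⁿ • ⊤`.
-/

open Submodule TensorProduct

namespace Submodule

variable {R M : Type*} [CommSemiring R] [AddCommMonoid M] [Module R M]

theorem baseChange_ideal_smul (A : Type*) [CommSemiring A] [Algebra R A]
    (I : Ideal R) (N : Submodule R M) :
    (I • N).baseChange A = I.map (algebraMap R A) • N.baseChange A := by
  conv_lhs => rw [← Ideal.span_eq I, ← N.span_eq, span_smul_span, baseChange_span]
  rw [Ideal.map, baseChange_eq_span, map_coe, span_smul_span, ← Set.image2_smul,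
    ← Set.image2_smul, Set.image_image2, Set.image2_image_left, Set.image2_image_right]
  congr 2
  ext i n
  simp [algebraMap_smul]

theorem pow_smul_le_of_forall_smul_le_succ {I : Ideal R} {K : ℕ → Submodule R M}
    (h : ∀ n, I • K n ≤ K (n + 1)) (n : ℕ) : I ^ n • K 0 ≤ K n := by
  induction n with
  | zero => simp
  | succ n ih =>
    rw [pow_succ', mul_smul]
    exact (smul_mono_right I ih).trans (h n)

theorem add_eq_pow_smul_of_forall_smul_eq_succ {I : Ideal R} {K : ℕ → Submodule R M} {N : ℕ}
    (h : ∀ n, N ≤ n → I • K n = K (n + 1)) (k : ℕ) : K (N + k) = I ^ k • K N := by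
  induction k with
  | zero => simp
  | succ k ih => rw [← add_assoc, ← h _ (Nat.le_add_right N k), ih, pow_succ', mul_smul]

end Submodule

theorem stmt_5_general (R : Type*) [CommRing R] (I : Ideal R)
    (M : Type*) [AddCommGroup M] [Module R M]
    (R' : Type*) [CommRing R'] [Algebra R R']
    (K : ℕ → Submodule R M)
    (hK0 : K 0 = ⊤)
    (hgood : ∀ n, I • K n ≤ K (n + 1))
    (hstable : ∃ N, ∀ n, N ≤ n → I • K n = K (n + 1)) :
    (∀ n, I.map (algebraMap R R') • (K n).baseChange R' ≤ (K (n + 1)).baseChange R') ∧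
    (∃ N, ∀ n, N ≤ n →
      I.map (algebraMap R R') • (K n).baseChange R' = (K (n + 1)).baseChange R') ∧
    (∀ n, ∃ m, (K m).baseChange R' ≤
      (I.map (algebraMap R R')) ^ n • (⊤ : Submodule R' (R' ⊗[R] M))) ∧
    (∀ n, ∃ m, (I.map (algebraMap R R')) ^ m • (⊤ : Submodule R' (R' ⊗[R] M)) ≤
      (K n).baseChange R') := by
  obtain ⟨N, hN⟩ := hstable
  have hgood' : ∀ n, I.map (algebraMap R R') • (K n).baseChange R' ≤
      (K (n + 1)).baseChange R' := fun n => by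
    rw [← baseChange_ideal_smul]
    exact baseChange_mono R' (hgood n)
  have hstable' : ∀ n, N ≤ n → I.map (algebraMap R R') • (K n).baseChange R' =
      (K (n + 1)).baseChange R' := fun n hn => by
    rw [← baseChange_ideal_smul, hN n hn]
  refine ⟨hgood', ⟨N, hstable'⟩, fun n => ⟨N + n, ?_⟩, fun n => ⟨n, ?_⟩⟩
  · rw [add_eq_pow_smul_of_forall_smul_eq_succ hstable' n]
    exact smul_mono_right _ le_top
  · simpa [hK0] using pow_smul_le_of_forall_smul_le_succ hgood' n

/-- Flat base change of an `I`-good filtration: if `(K n)` is an `I`-good filtration of a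
finitely generated module `M` over a Noetherian ring `R` and `R → R'` is flat, then the
base-changed filtration `(R' ⊗_R K n)` of `R' ⊗_R M` is `I·R'`-good; in particular the
topology it defines on `R' ⊗_R M` coincides with the `I·R'`-adic topology. -/
theorem stmt_5 (R : Type*) [CommRing R] [IsNoetherianRing R] (I : Ideal R)
    (M : Type*) [AddCommGroup M] [Module R M] [Module.Finite R M]
    (R' : Type*) [CommRing R'] [Algebra R R'] [Module.Flat R R']
    (K : ℕ → Submodule R M)
    (hK0 : K 0 = ⊤)
    (hKdec : ∀ n, K (n + 1) ≤ K n)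
    (hgood : ∀ n, I • K n ≤ K (n + 1))
    (hstable : ∃ N, ∀ n, N ≤ n → I • K n = K (n + 1)) :
    (∀ n, I.map (algebraMap R R') • (K n).baseChange R' ≤ (K (n + 1)).baseChange R') ∧
    (∃ N, ∀ n, N ≤ n →
      I.map (algebraMap R R') • (K n).baseChange R' = (K (n + 1)).baseChange R') ∧
    (∀ n, ∃ m, (K m).baseChange R' ≤
      (I.map (algebraMap R R')) ^ n • (⊤ : Submodule R' (R' ⊗[R] M))) ∧
    (∀ n, ∃ m, (I.map (algebraMap R R')) ^ m • (⊤ : Submodule R' (R' ⊗[R] M)) ≤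
      (K n).baseChange R') :=
  stmt_5_general R I M R' K hK0 hgood hstable
end

section
/- Let A → B be a faithfully flat ring homomorphism, let A → Â be a ring homomorphism, set B̂ = Â ⊗_A B, and view all four rings via the resulting commutative square. If A → Â is injective, then A = B ∩ Â inside B̂, i.e. an element of B whose image in B̂ lies in the image of Â already lies in A. -/
/-!
By faithfully flat descent, `b : B` comes from `A` as soon as `b ⊗ 1 = 1 ⊗ b` in `B ⊗[A] B`.
Applying `x ↦ x ⊗ 1` and `x ↦ 1 ⊗ x` on the `B` factor of `1 ⊗ b = â ⊗ 1` gives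
`1 ⊗ (b ⊗ 1) = â ⊗ 1 ⊗ 1 = 1 ⊗ (1 ⊗ b)` in `Â ⊗[A] (B ⊗[A] B)`, and `1 ⊗ -` can be cancelled
there because `B ⊗[A] B` is flat over `A` and `A → Â` is injective.
-/

open TensorProduct

lemma tmul_one_eq_one_tmul_of_one_tmul_eq_tmul_one {A B Ahat : Type*} [CommRing A] [CommRing B]
    [CommRing Ahat] [Algebra A B] [Algebra A Ahat] [Module.Flat A B] [FaithfulSMul A Ahat]
    {b : B} {ahat : Ahat} (h : (1 : Ahat) ⊗ₜ[A] b = ahat ⊗ₜ[A] (1 : B)) :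
    b ⊗ₜ[A] (1 : B) = 1 ⊗ₜ[A] b := by
  apply Module.Flat.tensorProduct_mk_injective (R := A) (S := Ahat) (M := B ⊗[A] B)
  have hleft := congrArg (LinearMap.lTensor Ahat ((TensorProduct.mk A B B).flip 1)) h
  have hright := congrArg (LinearMap.lTensor Ahat (TensorProduct.mk A B B 1)) h
  simp only [LinearMap.lTensor_tmul, TensorProduct.mk_apply, LinearMap.flip_apply] at hleft hright
  simpa only [TensorProduct.mk_apply] using hleft.trans hright.symm

/-- If `A → B` is faithfully flat, `A → Â` is an injective ring map, and `B̂ = Â ⊗_A B`,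
then `A = B ∩ Â` inside `B̂`: any `b : B` whose image `1 ⊗ b` in `B̂` lies in the image
of `Â` (i.e. equals some `â ⊗ 1`) comes from an element of `A`. -/
theorem stmt_9 (A B Ahat : Type*) [CommRing A] [CommRing B] [CommRing Ahat]
    [Algebra A B] [Algebra A Ahat]
    [Module.FaithfullyFlat A B]
    (hinj : Function.Injective (algebraMap A Ahat)) :
    ∀ b : B, (∃ ahat : Ahat, ((1 : Ahat) ⊗ₜ[A] b : Ahat ⊗[A] B) = ahat ⊗ₜ[A] (1 : B)) →
      ∃ a : A, algebraMap A B a = b := by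
  rintro b ⟨ahat, hb⟩
  have : FaithfulSMul A Ahat := (faithfulSMul_iff_algebraMap_injective A Ahat).mpr hinj
  exact (Algebra.IsEffective.of_faithfullyFlat A B).eqLocus_includeLeft_includeRight.le
    (tmul_one_eq_one_tmul_of_one_tmul_eq_tmul_one hb)
end

section
/- Let A = colim_{λ} A_λ be a filtered colimit of commutative rings with ring maps φ_λ : A_λ → B_λ forming a compatible system with colimit φ : A → B = colim_λ B_λ, where each B_λ is a finite A_λ-module. If φ : A → B is flat and each B_μ is a finitely presented A_μ-module for μ large, then there exists λ_0 such that φ_λ : A_λ → B_λ is flat for all λ ≥ λ_0. -/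
/-!
Base change carries a finite presentation of `B i₀` over `A i₀` to one of every `B j` over
`A j`, and, since only finitely many equations are involved, to one of `Binf` over `Ainf`.
Flat and finitely presented, `Binf` is projective, so the presentation map `Ainfⁿ → Binf` has a
section; it is given by an `n × n` matrix subject to finitely many equations, which already hold
at some finite stage `K`. Then `B K` is a direct summand of `(A K)ⁿ`, hence projective and flat,
and flatness passes to every later `B i ≅ A i ⊗ B K`.
-/

open Function Filter

section BaseChange

variable {R S : Type*} [CommRing R] [CommRing S] [Algebra R S]
  {M₁ M₂ M₃ N₁ N₂ N₃ : Type*}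
  [AddCommGroup M₁] [AddCommGroup M₂] [AddCommGroup M₃]
  [Module R M₁] [Module R M₂] [Module R M₃]
  [AddCommGroup N₁] [AddCommGroup N₂] [AddCommGroup N₃]
  [Module R N₁] [Module R N₂] [Module R N₃]
  [Module S N₁] [Module S N₂] [Module S N₃]
  [IsScalarTower R S N₁] [IsScalarTower R S N₂] [IsScalarTower R S N₃]
  {i₁ : M₁ →ₗ[R] N₁} {i₂ : M₂ →ₗ[R] N₂} {i₃ : M₃ →ₗ[R] N₃}

theorem IsBaseChange.comp_equiv_eq_equiv_comp {g : M₂ →ₗ[R] M₃} {g' : N₂ →ₗ[S] N₃}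
    (h₂ : IsBaseChange S i₂) (h₃ : IsBaseChange S i₃)
    (comm : g'.restrictScalars R ∘ₗ i₂ = i₃ ∘ₗ g) :
    g' ∘ₗ h₂.equiv.toLinearMap = h₃.equiv.toLinearMap ∘ₗ g.baseChange S := by
  ext m
  simp [IsBaseChange.equiv_tmul, ← LinearMap.comp_apply, ← comm]

theorem IsBaseChange.surjective_of_surjective {g : M₂ →ₗ[R] M₃} {g' : N₂ →ₗ[S] N₃}
    (h₂ : IsBaseChange S i₂) (h₃ : IsBaseChange S i₃)
    (comm : g'.restrictScalars R ∘ₗ i₂ = i₃ ∘ₗ g) (hg : Surjective g) : Surjective g' := by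
  refine Surjective.of_comp (g := h₂.equiv) ?_
  rw [← LinearEquiv.coe_coe, ← LinearMap.coe_comp, h₂.comp_equiv_eq_equiv_comp h₃ comm,
    LinearMap.coe_comp, LinearMap.baseChange_eq_ltensor]
  exact h₃.equiv.surjective.comp (LinearMap.lTensor_surjective S hg)

theorem IsBaseChange.exact_of_exact {f : M₁ →ₗ[R] M₂} {g : M₂ →ₗ[R] M₃}
    {f' : N₁ →ₗ[S] N₂} {g' : N₂ →ₗ[S] N₃}
    (h₁ : IsBaseChange S i₁) (h₂ : IsBaseChange S i₂) (h₃ : IsBaseChange S i₃)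
    (comm₁ : f'.restrictScalars R ∘ₗ i₁ = i₂ ∘ₗ f) (comm₂ : g'.restrictScalars R ∘ₗ i₂ = i₃ ∘ₗ g)
    (hfg : Exact f g) (hg : Surjective g) : Exact f' g' := by
  refine Exact.of_ladder_linearEquiv_of_exact (h₁.comp_equiv_eq_equiv_comp h₂ comm₁)
    (h₂.comp_equiv_eq_equiv_comp h₃ comm₂) ?_
  rw [LinearMap.baseChange_eq_ltensor, LinearMap.baseChange_eq_ltensor]
  exact lTensor_exact S hfg hg

end BaseChange

section Presentation

variable {R : Type*} [CommRing R] {M : Type*} [AddCommGroup M] [Module R M]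
  {κ μ : Type*} [Fintype κ] [Fintype μ]

structure IsPresentedBy (b : κ → M) (c : μ → κ → R) : Prop where
  surjective : Surjective (Fintype.linearCombination R b)
  exact : Exact (Fintype.linearCombination R c) (Fintype.linearCombination R b)

/-- The rows `u k` are the values `s (b k)` of a section `s` of `Fintype.linearCombination R b`. -/
structure IsSplittingMatrix (b : κ → M) (c : μ → κ → R) (u : κ → κ → R) : Prop where
  generator : ∀ k, ∑ l, u k l • b l = b k
  relation : ∀ t, ∑ k, c t k • u k = 0

theorem Module.FinitePresentation.exists_isPresentedBy [Module.FinitePresentation R M] :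
    ∃ (n m : ℕ) (b : Fin n → M) (c : Fin m → Fin n → R), IsPresentedBy b c := by
  obtain ⟨n, b, hb⟩ := Module.Finite.exists_fin (R := R) (M := M)
  have hsurj : Surjective (Fintype.linearCombination R b) := by
    rw [← LinearMap.range_eq_top, Fintype.range_linearCombination, hb]
  obtain ⟨m, c, hc⟩ := Submodule.fg_iff_exists_fin_generating_family.mp
    (Module.FinitePresentation.fg_ker _ hsurj)
  refine ⟨n, m, b, c, hsurj, ?_⟩
  rw [LinearMap.exact_iff, Fintype.range_linearCombination, hc]

theorem IsPresentedBy.finitePresentation {b : κ → M} {c : μ → κ → R} (h : IsPresentedBy b c) :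
    Module.FinitePresentation R M := by
  refine Module.finitePresentation_of_surjective _ h.surjective ?_
  rw [h.exact.linearMap_ker_eq, Fintype.range_linearCombination]
  exact Submodule.fg_span (Set.finite_range c)

theorem IsPresentedBy.relation_eq_zero {b : κ → M} {c : μ → κ → R} (h : IsPresentedBy b c)
    (t : μ) : ∑ k, c t k • b k = 0 := by
  classical
  rw [← Fintype.linearCombination_apply]
  exact (h.exact _).mpr ⟨Pi.single t 1, by simp [Fintype.linearCombination_apply_single]⟩

theorem IsPresentedBy.exists_isSplittingMatrix [Module.Projective R M] {b : κ → M}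
    {c : μ → κ → R} (h : IsPresentedBy b c) : ∃ u, IsSplittingMatrix b c u := by
  obtain ⟨s, hs⟩ := Module.projective_lifting_property _ LinearMap.id h.surjective
  refine ⟨fun k => s (b k), fun k => ?_, fun t => ?_⟩
  · simpa [Fintype.linearCombination_apply] using LinearMap.congr_fun hs (b k)
  · simp_rw [← map_smul, ← map_sum, h.relation_eq_zero, map_zero]

theorem IsPresentedBy.projective_of_isSplittingMatrix {b : κ → M} {c : μ → κ → R}
    {u : κ → κ → R} (h : IsPresentedBy b c) (hu : IsSplittingMatrix b c u) :
    Module.Projective R M := by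
  set P := Fintype.linearCombination R b
  set T := Fintype.linearCombination R u
  have hTC : LinearMap.range (Fintype.linearCombination R c) ≤ LinearMap.ker T := by
    rintro _ ⟨w, rfl⟩
    simp [T, Fintype.linearCombination_apply, hu.relation]
  have hPT : ∀ v, P (T v) = P v := fun v => by
    simp [P, T, Fintype.linearCombination_apply, hu.generator]
  let σ : M →ₗ[R] κ → R :=
    (LinearMap.range _).liftQ T hTC ∘ₗ (h.exact.linearEquivOfSurjective h.surjective).symm
  refine Module.Projective.of_split σ P (LinearMap.ext fun x => ?_)
  obtain ⟨v, rfl⟩ := h.surjective x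
  simpa [σ] using hPT v

theorem IsPresentedBy.of_isBaseChange {S N : Type*} [CommRing S] [Algebra R S] [AddCommGroup N]
    [Module R N] [Module S N] [IsScalarTower R S N] {ℓ : M →ₗ[R] N} (hℓ : IsBaseChange S ℓ)
    {b : κ → M} {c : μ → κ → R} (h : IsPresentedBy b c) :
    IsPresentedBy (fun k => ℓ (b k)) (fun t k => algebraMap R S (c t k)) := by
  have hκ := (IsBaseChange.linearMap R S).finitePow κ
  have hμ := (IsBaseChange.linearMap R S).finitePow μ
  have comm₁ : (Fintype.linearCombination S fun t k => algebraMap R S (c t k)).restrictScalars R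
      ∘ₗ (Algebra.linearMap R S).compLeft μ
      = (Algebra.linearMap R S).compLeft κ ∘ₗ Fintype.linearCombination R c := by
    ext w k
    simp [Fintype.linearCombination_apply, Algebra.smul_def]
  have comm₂ : (Fintype.linearCombination S fun k => ℓ (b k)).restrictScalars R
      ∘ₗ (Algebra.linearMap R S).compLeft κ = ℓ ∘ₗ Fintype.linearCombination R b := by
    ext v
    simp [Fintype.linearCombination_apply]
  exact ⟨hκ.surjective_of_surjective hℓ comm₂ h.surjective,
    hμ.exact_of_exact hκ hℓ comm₁ comm₂ h.exact h.surjective⟩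

end Presentation

section FilteredColimit

variable {ι : Type*} [Preorder ι] {X : ι → Type*} {Y : Type*}

structure IsFilteredColimit (f : ∀ ⦃i j : ι⦄, i ≤ j → X i → X j) (g : ∀ i, X i → Y) :
    Prop where
  map_map : ∀ ⦃i j k : ι⦄ (hij : i ≤ j) (hjk : j ≤ k) (x : X i),
    f hjk (f hij x) = f (hij.trans hjk) x
  map_comp : ∀ ⦃i j : ι⦄ (h : i ≤ j) (x : X i), g j (f h x) = g i x
  exists_eq : ∀ y, ∃ i x, g i x = y
  exists_map_eq : ∀ i (x x' : X i), g i x = g i x' → ∃ j, ∃ h : i ≤ j, f h x = f h x'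

variable {f : ∀ ⦃i j : ι⦄, i ≤ j → X i → X j} {g : ∀ i, X i → Y}

theorem IsFilteredColimit.eventually_exists_eq (hX : IsFilteredColimit f g) (y : Y) :
    ∀ᶠ j in atTop, ∃ x : X j, g j x = y := by
  obtain ⟨i, x, rfl⟩ := hX.exists_eq y
  filter_upwards [eventually_ge_atTop i] with j hij
  exact ⟨f hij x, hX.map_comp hij x⟩

theorem IsFilteredColimit.eventually_map_eq (hX : IsFilteredColimit f g) {i : ι} {x x' : X i}
    (h : g i x = g i x') : ∀ᶠ j in atTop, ∀ hij : i ≤ j, f hij x = f hij x' := by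
  obtain ⟨j, hij, e⟩ := hX.exists_map_eq i x x' h
  filter_upwards [eventually_ge_atTop j] with k hjk _
  rw [← hX.map_map hij hjk, e, hX.map_map]

end FilteredColimit

theorem RingHom.map_smul_of_comp_algebraMap {A B A' B' : Type*} [CommRing A] [CommRing B]
    [CommRing A'] [CommRing B'] [Algebra A B] [Algebra A' B'] {f : A →+* A'} {g : B →+* B'}
    (hfg : g.comp (algebraMap A B) = (algebraMap A' B').comp f) (a : A) (x : B) :
    g (a • x) = f a • g x := by
  rw [Algebra.smul_def, Algebra.smul_def, map_mul, ← RingHom.comp_apply, hfg, RingHom.comp_apply]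

section ColimitOfAlgebras

variable {ι : Type*} [Preorder ι] {A B : ι → Type*} [∀ i, CommRing (A i)] [∀ i, CommRing (B i)]
  [∀ i, Algebra (A i) (B i)] {Ainf Binf : Type*} [CommRing Ainf] [CommRing Binf]
  [Algebra Ainf Binf]

structure IsFilteredColimitOfAlgebras (fA : ∀ ⦃i j : ι⦄, i ≤ j → A i →+* A j)
    (fB : ∀ ⦃i j : ι⦄, i ≤ j → B i →+* B j) (gA : ∀ i, A i →+* Ainf) (gB : ∀ i, B i →+* Binf) :
    Prop where
  scalars : IsFilteredColimit (fun _ _ h => fA h) fun i => gA i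
  algebras : IsFilteredColimit (fun _ _ h => fB h) fun i => gB i
  transition_algebraMap : ∀ ⦃i j : ι⦄ (h : i ≤ j),
    (fB h).comp (algebraMap (A i) (B i)) = (algebraMap (A j) (B j)).comp (fA h)
  cocone_algebraMap : ∀ i, (gB i).comp (algebraMap (A i) (B i)) = (algebraMap Ainf Binf).comp (gA i)

namespace IsFilteredColimitOfAlgebras

variable {fA : ∀ ⦃i j : ι⦄, i ≤ j → A i →+* A j} {fB : ∀ ⦃i j : ι⦄, i ≤ j → B i →+* B j}
  {gA : ∀ i, A i →+* Ainf} {gB : ∀ i, B i →+* Binf} {κ μ : Type*} [Fintype κ] [Fintype μ]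

theorem map_linearCombination (H : IsFilteredColimitOfAlgebras fA fB gA gB) {i j : ι}
    (h : i ≤ j) (b : κ → B i) (v : κ → A j) :
    gB j (Fintype.linearCombination (A j) (fun k => fB h (b k)) v)
      = Fintype.linearCombination Ainf (fun k => gB i (b k)) (fun k => gA j (v k)) := by
  simp [Fintype.linearCombination_apply,
    RingHom.map_smul_of_comp_algebraMap (H.cocone_algebraMap j), H.algebras.map_comp]

theorem isPresentedBy [IsDirected ι (· ≤ ·)] [Nonempty ι]
    (H : IsFilteredColimitOfAlgebras fA fB gA gB) {i₀ : ι} {b : κ → B i₀} {c : μ → κ → A i₀}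
    (hb : ∀ j (h : i₀ ≤ j), IsPresentedBy (fun k => fB h (b k)) fun t k => fA h (c t k)) :
    IsPresentedBy (fun k => gB i₀ (b k)) fun t k => gA i₀ (c t k) := by
  constructor
  · intro y
    obtain ⟨j, hj, x, rfl⟩ :=
      ((eventually_ge_atTop i₀).and (H.algebras.eventually_exists_eq y)).exists
    obtain ⟨v, rfl⟩ := (hb j hj).surjective x
    exact ⟨_, (H.map_linearCombination hj b v).symm⟩
  intro y
  constructor
  · intro hy
    obtain ⟨J, hJ, hv⟩ := ((eventually_ge_atTop i₀).and
      (eventually_all.2 fun k => H.scalars.eventually_exists_eq (y k))).exists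
    choose v hv using hv
    have h0 : gB J (Fintype.linearCombination (A J) (fun k => fB hJ (b k)) v) = gB J 0 := by
      rw [H.map_linearCombination, map_zero, ← hy]
      simp only [hv]
    obtain ⟨K, hJK, hK⟩ :=
      ((eventually_ge_atTop J).and (H.algebras.eventually_map_eq h0)).exists
    have hvK := hK hJK
    simp only [Fintype.linearCombination_apply, map_sum, map_zero,
      RingHom.map_smul_of_comp_algebraMap (H.transition_algebraMap hJK),
      H.algebras.map_map] at hvK
    rw [← Fintype.linearCombination_apply] at hvK
    obtain ⟨w, hw⟩ := ((hb K (hJ.trans hJK)).exact _).mp hvK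
    refine ⟨fun t => gA K (w t), funext fun r => ?_⟩
    rw [← hv r, ← H.scalars.map_comp hJK, ← congrFun hw r]
    simp [Fintype.linearCombination_apply, H.scalars.map_comp]
  · rintro ⟨w, rfl⟩
    have hrel : ∀ t, ∑ k, gA i₀ (c t k) • gB i₀ (b k) = 0 := fun t => by
      simpa [RingHom.map_smul_of_comp_algebraMap (H.cocone_algebraMap i₀),
        H.scalars.map_comp, H.algebras.map_comp]
        using congrArg (gB i₀) ((hb i₀ le_rfl).relation_eq_zero t)
    simp [Fintype.linearCombination_apply, hrel]

theorem exists_isSplittingMatrix [IsDirected ι (· ≤ ·)] [Nonempty ι]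
    (H : IsFilteredColimitOfAlgebras fA fB gA gB) {i₀ : ι} {b : κ → B i₀} {c : μ → κ → A i₀}
    {u : κ → κ → Ainf}
    (hu : IsSplittingMatrix (fun k => gB i₀ (b k)) (fun t k => gA i₀ (c t k)) u) :
    ∃ K, ∃ h : i₀ ≤ K, ∃ u' : κ → κ → A K,
      IsSplittingMatrix (fun k => fB h (b k)) (fun t k => fA h (c t k)) u' := by
  obtain ⟨J, hJ, hv⟩ := ((eventually_ge_atTop i₀).and (eventually_all.2 fun k =>
    eventually_all.2 fun l => H.scalars.eventually_exists_eq (u k l))).exists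
  choose v hv using hv
  have hgen : ∀ k, gB J (∑ l, v k l • fB hJ (b l)) = gB J (fB hJ (b k)) := fun k => by
    simpa [RingHom.map_smul_of_comp_algebraMap (H.cocone_algebraMap J), hv,
      H.algebras.map_comp] using hu.generator k
  have hrel : ∀ t r, gA J (∑ k, fA hJ (c t k) * v k r) = gA J 0 := fun t r => by
    simpa [hv, H.scalars.map_comp] using congrFun (hu.relation t) r
  obtain ⟨K, hJK, hgenK, hrelK⟩ := ((eventually_ge_atTop J).and
    ((eventually_all.2 fun k => H.algebras.eventually_map_eq (hgen k)).and
      (eventually_all.2 fun t => eventually_all.2 fun r =>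
        H.scalars.eventually_map_eq (hrel t r)))).exists
  refine ⟨K, hJ.trans hJK, fun k l => fA hJK (v k l), fun k => ?_, fun t => funext fun r => ?_⟩
  · simpa [RingHom.map_smul_of_comp_algebraMap (H.transition_algebraMap hJK),
      H.algebras.map_map] using hgenK k hJK
  · simpa [H.scalars.map_map] using hrelK t r hJK

end IsFilteredColimitOfAlgebras

end ColimitOfAlgebras

theorem stmt_15_general {ι : Type*} [Preorder ι] [IsDirected ι (· ≤ ·)] [Nonempty ι]
    (A B : ι → Type*) [∀ i, CommRing (A i)] [∀ i, CommRing (B i)]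
    (Ainf Binf : Type*) [CommRing Ainf] [CommRing Binf]
    (fA : ∀ ⦃i j : ι⦄, i ≤ j → (A i →+* A j))
    (fB : ∀ ⦃i j : ι⦄, i ≤ j → (B i →+* B j))
    (φ : ∀ i, A i →+* B i) (φinf : Ainf →+* Binf)
    (gA : ∀ i, A i →+* Ainf) (gB : ∀ i, B i →+* Binf)
    (hfA_comp : ∀ ⦃i j k : ι⦄ (hij : i ≤ j) (hjk : j ≤ k) (x : A i),
      fA hjk (fA hij x) = fA (hij.trans hjk) x)
    (hfB_comp : ∀ ⦃i j k : ι⦄ (hij : i ≤ j) (hjk : j ≤ k) (x : B i),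
      fB hjk (fB hij x) = fB (hij.trans hjk) x)
    (hsq : ∀ ⦃i j : ι⦄ (h : i ≤ j), (fB h).comp (φ i) = (φ j).comp (fA h))
    (hgA : ∀ ⦃i j : ι⦄ (h : i ≤ j), (gA j).comp (fA h) = gA i)
    (hgB : ∀ ⦃i j : ι⦄ (h : i ≤ j), (gB j).comp (fB h) = gB i)
    (hφinf : ∀ i, φinf.comp (gA i) = (gB i).comp (φ i))
    -- `Ainf` and `Binf` are the filtered colimits of the systems
    (hAsurj : ∀ x : Ainf, ∃ i a, gA i a = x)
    (hBsurj : ∀ x : Binf, ∃ i b, gB i b = x)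
    (hAeq : ∀ i (a a' : A i), gA i a = gA i a' → ∃ j, ∃ h : i ≤ j, fA h a = fA h a')
    (hBeq : ∀ i (b b' : B i), gB i b = gB i b' → ∃ j, ∃ h : i ≤ j, fB h b = fB h b')
    -- `B i` is a finitely presented `A i`-module for `i` large
    (i₀ : ι)
    (hfp : ∀ i, i₀ ≤ i →
      letI := (φ i).toAlgebra
      Module.FinitePresentation (A i) (B i))
    -- the transition maps exhibit `B j` as the base change `B i ⊗_{A i} A j`
    (ℓ : ∀ ⦃i j : ι⦄ (h : i ≤ j),
      letI := (φ i).toAlgebra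
      letI := ((φ j).comp (fA h)).toAlgebra
      B i →ₗ[A i] B j)
    (hℓ : ∀ ⦃i j : ι⦄ (h : i ≤ j) (b : B i), ℓ h b = fB h b)
    (htower : ∀ ⦃i j : ι⦄ (h : i ≤ j),
      letI := (fA h).toAlgebra
      letI := ((φ j).comp (fA h)).toAlgebra
      letI := (φ j).toAlgebra
      IsScalarTower (A i) (A j) (B j))
    (hbc : ∀ ⦃i j : ι⦄ (h : i ≤ j),
      letI := (φ i).toAlgebra
      letI := (fA h).toAlgebra
      letI := ((φ j).comp (fA h)).toAlgebra
      letI := (φ j).toAlgebra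
      haveI := htower h
      IsBaseChange (A j) (ℓ h))
    -- flatness of the colimit map
    (hflat : φinf.Flat) :
    ∃ i₁, ∀ i, i₁ ≤ i → (φ i).Flat := by
  let : ∀ i, Algebra (A i) (B i) := fun i => (φ i).toAlgebra
  let : Algebra Ainf Binf := φinf.toAlgebra
  have H : IsFilteredColimitOfAlgebras fA fB gA gB :=
    ⟨⟨hfA_comp, fun _ _ h => RingHom.congr_fun (hgA h), hAsurj, hAeq⟩,
      ⟨hfB_comp, fun _ _ h => RingHom.congr_fun (hgB h), hBsurj, hBeq⟩,
      hsq, fun i => (hφinf i).symm⟩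
  have := hfp i₀ le_rfl
  obtain ⟨n, m, b, c, hpres⟩ :=
    Module.FinitePresentation.exists_isPresentedBy (R := A i₀) (M := B i₀)
  have hstage : ∀ j (h : i₀ ≤ j), IsPresentedBy (fun k => fB h (b k)) fun t k => fA h (c t k) := by
    intro j h
    let := (fA h).toAlgebra
    let := ((φ j).comp (fA h)).toAlgebra
    have := htower h
    simpa only [hℓ, RingHom.algebraMap_toAlgebra] using hpres.of_isBaseChange (hbc h)
  have hinf := H.isPresentedBy hstage
  have : Module.Flat Ainf Binf := hflat
  have := hinf.finitePresentation
  have := Module.Flat.projective_of_finitePresentation (R := Ainf) (M := Binf)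
  obtain ⟨u, hu⟩ := hinf.exists_isSplittingMatrix
  obtain ⟨K, hK, u', hu'⟩ := H.exists_isSplittingMatrix hu
  have := (hstage K hK).projective_of_isSplittingMatrix hu'
  refine ⟨K, fun i hi => ?_⟩
  let := (fA hi).toAlgebra
  let := ((φ i).comp (fA hi)).toAlgebra
  have := htower hi
  exact Module.Flat.isBaseChange (A K) (A i) (B K) (B i) (hbc hi)

/-- Descent of flatness along a filtered colimit of rings (EGA IV 11.2.6): given a
directed system of rings `(A i)` and `(B i)` with compatible finite module structures
`φ i : A i →+* B i`, colimit map `φ∞ : A∞ →+* B∞`, such that `B j` is the base change of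
`B i` along `A i → A j` for large `i ≤ j` and `B i` is a finitely presented `A i`-module
for large `i`, if `φ∞` is flat then `φ i` is flat for all sufficiently large `i`. -/
theorem stmt_15 {ι : Type*} [Preorder ι] [IsDirected ι (· ≤ ·)] [Nonempty ι]
    (A B : ι → Type*) [∀ i, CommRing (A i)] [∀ i, CommRing (B i)]
    (Ainf Binf : Type*) [CommRing Ainf] [CommRing Binf]
    (fA : ∀ ⦃i j : ι⦄, i ≤ j → (A i →+* A j))
    (fB : ∀ ⦃i j : ι⦄, i ≤ j → (B i →+* B j))
    (φ : ∀ i, A i →+* B i) (φinf : Ainf →+* Binf)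
    (gA : ∀ i, A i →+* Ainf) (gB : ∀ i, B i →+* Binf)
    (hfA_id : ∀ i, fA (le_refl i) = RingHom.id (A i))
    (hfB_id : ∀ i, fB (le_refl i) = RingHom.id (B i))
    (hfA_comp : ∀ ⦃i j k : ι⦄ (hij : i ≤ j) (hjk : j ≤ k) (x : A i),
      fA hjk (fA hij x) = fA (hij.trans hjk) x)
    (hfB_comp : ∀ ⦃i j k : ι⦄ (hij : i ≤ j) (hjk : j ≤ k) (x : B i),
      fB hjk (fB hij x) = fB (hij.trans hjk) x)
    (hsq : ∀ ⦃i j : ι⦄ (h : i ≤ j), (fB h).comp (φ i) = (φ j).comp (fA h))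
    (hgA : ∀ ⦃i j : ι⦄ (h : i ≤ j), (gA j).comp (fA h) = gA i)
    (hgB : ∀ ⦃i j : ι⦄ (h : i ≤ j), (gB j).comp (fB h) = gB i)
    (hφinf : ∀ i, φinf.comp (gA i) = (gB i).comp (φ i))
    -- `Ainf` and `Binf` are the filtered colimits of the systems
    (hAsurj : ∀ x : Ainf, ∃ i a, gA i a = x)
    (hBsurj : ∀ x : Binf, ∃ i b, gB i b = x)
    (hAeq : ∀ i (a a' : A i), gA i a = gA i a' → ∃ j, ∃ h : i ≤ j, fA h a = fA h a')
    (hBeq : ∀ i (b b' : B i), gB i b = gB i b' → ∃ j, ∃ h : i ≤ j, fB h b = fB h b')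
    -- each `B i` is a finite `A i`-module
    (hfin : ∀ i, (φ i).Finite)
    -- `B i` is a finitely presented `A i`-module for `i` large
    (i₀ : ι)
    (hfp : ∀ i, i₀ ≤ i →
      letI := (φ i).toAlgebra
      Module.FinitePresentation (A i) (B i))
    -- the transition maps exhibit `B j` as the base change `B i ⊗_{A i} A j`
    (ℓ : ∀ ⦃i j : ι⦄ (h : i ≤ j),
      letI := (φ i).toAlgebra
      letI := ((φ j).comp (fA h)).toAlgebra
      B i →ₗ[A i] B j)
    (hℓ : ∀ ⦃i j : ι⦄ (h : i ≤ j) (b : B i), ℓ h b = fB h b)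
    (htower : ∀ ⦃i j : ι⦄ (h : i ≤ j),
      letI := (fA h).toAlgebra
      letI := ((φ j).comp (fA h)).toAlgebra
      letI := (φ j).toAlgebra
      IsScalarTower (A i) (A j) (B j))
    (hbc : ∀ ⦃i j : ι⦄ (h : i ≤ j),
      letI := (φ i).toAlgebra
      letI := (fA h).toAlgebra
      letI := ((φ j).comp (fA h)).toAlgebra
      letI := (φ j).toAlgebra
      haveI := htower h
      IsBaseChange (A j) (ℓ h))
    -- flatness of the colimit map
    (hflat : φinf.Flat) :
    ∃ i₁, ∀ i, i₁ ≤ i → (φ i).Flat :=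
  stmt_15_general A B Ainf Binf fA fB φ φinf gA gB hfA_comp hfB_comp hsq hgA hgB hφinf hAsurj hBsurj
    hAeq hBeq i₀ hfp ℓ hℓ htower hbc hflat
end
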